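/- For any natural numbers n ≥ 1 and b ≥ 1, the Dedekind sum s(2n²b² + 2nb + 1, 2nb²) equals (2n²b² − 3nb² + 1)/(12nb²). -/

import Mathlib

/-- The sawtooth function `((x))`: zero on integers, else `x - ⌊x⌋ - 1/2`. -/
def saw (x : ℚ) : ℚ := if x = ⌊x⌋ then 0 else x - ⌊x⌋ - 1/2

/-- The Dedekind sum `s(p,q) = ∑_{i=1}^{|q|} ((i/q)) ((p i/q))`. -/
noncomputable def dedekindSum (p q : ℤ) : ℚ :=
  ∑ i ∈ Finset.Icc (1 : ℤ) |q|, saw ((i : ℚ) / (q : ℚ)) * saw ((p : ℚ) * (i : ℚ) / (q : ℚ))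

/-!
Since `s(p, q)` depends only on `p mod q`, the sum is `s(cb + 1, cb²)` with `c = 2n`. For `p`
coprime to `q`, `s(p, q) = ∑_{i<q} (i/q - 1/2) ((p i mod q)/q - 1/2) - 1/4`, the correction
coming from `i = 0`. Writing `i = m b + r` with `m < cb` and `r < b`, one has
`(cb + 1) i ≡ (m + c r) b + r (mod cb²)`, which wraps around exactly when `m + c r ≥ cb`.
For fixed `r` the sum over `m` is then `(c²b² + 2) (6r² - 6br + b²) / (12cb³)`, and
`∑_{r<b} (6r² - 6br + b²) = b`.
-/

open Finset

lemma sum_range_mul_eq_sum_sum {M : Type*} [AddCommMonoid M] (f : ℕ → M) (a b : ℕ) :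
    ∑ i ∈ range (a * b), f i = ∑ m ∈ range a, ∑ r ∈ range b, f (m * b + r) := by
  induction a with
  | zero => simp
  | succ a ih => rw [sum_range_succ, ← ih, Nat.succ_mul, sum_range_add]

lemma sum_range_quadratic (α β γ : ℚ) (k : ℕ) :
    ∑ i ∈ range k, (α * i ^ 2 + β * i + γ) =
      α * (k * (k - 1) * (2 * k - 1) / 6) + β * (k * (k - 1) / 2) + γ * k := by
  induction k with
  | zero => simp
  | succ k ih => rw [sum_range_succ, ih]; push_cast; ring

lemma saw_eq_ite_fract (x : ℚ) : saw x = if Int.fract x = 0 then 0 else Int.fract x - 1 / 2 := by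
  simp only [saw, ← Int.self_sub_floor, sub_eq_zero]

lemma saw_add_intCast (x : ℚ) (k : ℤ) : saw (x + k) = saw x := by
  simp only [saw_eq_ite_fract, Int.fract_add_intCast]

lemma saw_natCast_div {N d : ℕ} (hd : 0 < d) (hN : ¬ d ∣ N) :
    saw (N / d) = (N % d : ℕ) / d - 1 / 2 := by
  have hmod : ((N % d : ℕ) : ℚ) / d ≠ 0 :=
    div_ne_zero (by exact_mod_cast (Nat.dvd_iff_mod_eq_zero).not.mp hN) (by positivity)
  rw [saw_eq_ite_fract, Int.fract_div_natCast_eq_div_natCast_mod, if_neg hmod]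

lemma dedekindSum_add_mul_right (p k q : ℤ) : dedekindSum (p + k * q) q = dedekindSum p q := by
  rcases eq_or_ne q 0 with rfl | hq
  · simp
  refine sum_congr rfl fun i _ => ?_
  have hshift : ((p + k * q : ℤ) : ℚ) * i / q = p * i / q + (k * i : ℤ) := by
    push_cast; field_simp
  rw [hshift, saw_add_intCast]

lemma dedekindSum_natCast_eq_sum_range (p : ℤ) (q : ℕ) :
    dedekindSum p q = ∑ i ∈ range q, saw (i / q) * saw (p * i / q) := by
  set f : ℕ → ℚ := fun i => saw (i / q) * saw (p * i / q)
  have hf0 : f 0 = 0 := by simp [f, saw]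
  have hfq : f q = 0 := by
    simp [f, saw_eq_ite_fract, Int.fract_div_natCast_eq_div_natCast_mod]
  have hshift := sum_range_succ' f q
  rw [sum_range_succ, hf0, hfq] at hshift
  rw [dedekindSum, abs_of_nonneg (Nat.cast_nonneg q), Int.Icc_eq_finset_map, sum_map]
  simpa [f, add_comm] using hshift.symm

lemma dedekindSum_natCast_eq_sum_range_mod {p q : ℕ} (hq : 0 < q) (hpq : p.Coprime q) :
    dedekindSum p q =
      ∑ i ∈ range q, ((i : ℚ) / q - 1 / 2) * ((p * i % q : ℕ) / q - 1 / 2) - 1 / 4 := by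
  have hsaw : ∀ i ∈ range q, i ≠ 0 →
      ((i : ℚ) / q - 1 / 2) * ((p * i % q : ℕ) / q - 1 / 2) =
        saw (i / q) * saw ((p : ℤ) * i / q) := by
    intro i hi hi0
    have hiq : i < q := mem_range.1 hi
    have hqi : ¬ q ∣ i := Nat.not_dvd_of_pos_of_lt (Nat.pos_of_ne_zero hi0) hiq
    have hqpi : ¬ q ∣ p * i := fun h => hqi ((Nat.Coprime.dvd_mul_left hpq.symm).1 h)
    rw [saw_natCast_div hq hqi, Nat.mod_eq_of_lt hiq, Int.cast_natCast, ← Nat.cast_mul,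
      saw_natCast_div hq hqpi]
  have hzero : ∑ i ∈ range q, (((i : ℚ) / q - 1 / 2) * ((p * i % q : ℕ) / q - 1 / 2) -
      saw (i / q) * saw ((p : ℤ) * i / q)) = 1 / 4 := by
    rw [sum_eq_single_of_mem 0 (mem_range.2 hq) fun i hi hi0 => sub_eq_zero.2 (hsaw i hi hi0)]
    norm_num [saw]
  rw [sum_sub_distrib] at hzero
  rw [dedekindSum_natCast_eq_sum_range]
  linarith

lemma mul_add_one_mul_add_mod {c b m r : ℕ} (hm : m < c * b) (hr : r < b) :
    (c * b + 1) * (m * b + r) % (c * b ^ 2) + (if c * b ≤ m + c * r then c * b ^ 2 else 0) =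
      (m + c * r) * b + r := by
  have hrow : ∀ t, t < c * b → t * b + r < c * b ^ 2 := fun t ht =>
    calc t * b + r < (t + 1) * b := by linarith
      _ ≤ c * b * b := Nat.mul_le_mul_right b ht
      _ = c * b ^ 2 := by ring
  have hcr : c * r < c * b :=
    Nat.mul_lt_mul_of_pos_left hr (Nat.pos_of_mul_pos_right (m.zero_le.trans_lt hm))
  rw [show (c * b + 1) * (m * b + r) = (m + c * r) * b + r + m * (c * b ^ 2) by ring,
    Nat.add_mul_mod_self_right]
  split_ifs with hwrap
  · obtain ⟨s, hs⟩ := Nat.exists_eq_add_of_le hwrap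
    rw [hs, show (c * b + s) * b + r = s * b + r + c * b ^ 2 by ring, Nat.add_mod_right,
      Nat.mod_eq_of_lt (hrow s (by omega))]
  · rw [Nat.mod_eq_of_lt (hrow _ (by omega)), add_zero]

lemma sum_row_mul_add_one_mul_sq {c b r : ℕ} (hc : 0 < c) (hb : 0 < b) (hr : r < b) :
    ∑ m ∈ range (c * b), (((m * b + r : ℕ) : ℚ) / (c * b ^ 2 : ℕ) - 1 / 2) *
        (((c * b + 1) * (m * b + r) % (c * b ^ 2) : ℕ) / (c * b ^ 2 : ℕ) - 1 / 2) =
      ((c * b) ^ 2 + 2) / (12 * c * b ^ 3) * (6 * r ^ 2 - 6 * b * r + b ^ 2) := by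
  have hc' : (c : ℚ) ≠ 0 := by positivity
  have hb' : (b : ℚ) ≠ 0 := by positivity
  set x : ℕ → ℚ := fun m => (m * b + r) / (c * b ^ 2)
  have hterm : ∀ m ∈ range (c * b),
      (((m * b + r : ℕ) : ℚ) / (c * b ^ 2 : ℕ) - 1 / 2) *
        (((c * b + 1) * (m * b + r) % (c * b ^ 2) : ℕ) / (c * b ^ 2 : ℕ) - 1 / 2) =
      (x m - 1 / 2) * (x m - 1 / 2 + r / b) - if c * b ≤ m + c * r then x m - 1 / 2 else 0 := by
    intro m hm
    have hmod := congrArg (Nat.cast (R := ℚ)) (mul_add_one_mul_add_mod (mem_range.1 hm) hr)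
    push_cast at hmod
    rw [eq_sub_of_add_eq hmod]
    simp only [x]
    push_cast
    split_ifs <;> field_simp <;> ring
  have hmain : ∑ m ∈ range (c * b), (x m - 1 / 2) * (x m - 1 / 2 + r / b) =
      ((c * b) ^ 2 + 2) / (12 * c * b) + r * (r - b) / (c * b ^ 3) + r / b * (r / b - 1 / 2) := by
    set u : ℚ := r / (c * b ^ 2) - 1 / 2
    calc ∑ m ∈ range (c * b), (x m - 1 / 2) * (x m - 1 / 2 + r / b)
        = ∑ m ∈ range (c * b), (1 / (c * b) ^ 2 * m ^ 2 + (2 * u + r / b) / (c * b) * m +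
            u * (u + r / b)) := sum_congr rfl fun m _ => by simp only [x, u]; field_simp; ring
      _ = _ := by rw [sum_range_quadratic]; simp only [u]; push_cast; field_simp; ring
  have hwrap : ∑ m ∈ range (c * b), (if c * b ≤ m + c * r then x m - 1 / 2 else 0) =
      c * r * (c * r - 1) / (2 * c * b) + c * r * ((b - r) / b + r / (c * b ^ 2) - 1 / 2) := by
    have hcr : c * r ≤ c * b := Nat.mul_le_mul_left c hr.le
    have hfilter : {m ∈ range (c * b) | c * b ≤ m + c * r} = Ico (c * b - c * r) (c * b) := by
      ext m; simp only [mem_filter, mem_range, mem_Ico]; omega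
    rw [← sum_filter, hfilter, sum_Ico_eq_sum_range, Nat.sub_sub_self hcr]
    calc ∑ k ∈ range (c * r), (x (c * b - c * r + k) - 1 / 2)
        = ∑ k ∈ range (c * r), ((0 : ℚ) * k ^ 2 + 1 / (c * b) * k +
            ((b - r) / b + r / (c * b ^ 2) - 1 / 2)) := sum_congr rfl fun k _ => by
          simp only [x]; push_cast [Nat.cast_sub hcr]; field_simp; ring
      _ = _ := by rw [sum_range_quadratic]; push_cast; ring
  rw [sum_congr rfl hterm, sum_sub_distrib, hmain, hwrap]
  field_simp
  ring

lemma sum_range_six_mul_sq_sub_six_mul_mul_add_sq (b : ℕ) :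
    ∑ r ∈ range b, (6 * (r : ℚ) ^ 2 - 6 * b * r + b ^ 2) = (b : ℚ) :=
  calc ∑ r ∈ range b, (6 * (r : ℚ) ^ 2 - 6 * b * r + b ^ 2)
      = ∑ r ∈ range b, (6 * (r : ℚ) ^ 2 + (-6 * b) * r + b ^ 2) :=
        sum_congr rfl fun r _ => by ring
    _ = (b : ℚ) := by rw [sum_range_quadratic]; ring

theorem dedekindSum_mul_add_one_mul_sq {c b : ℕ} (hc : 0 < c) (hb : 0 < b) :
    dedekindSum (c * b + 1) (c * b ^ 2) =
      ((c * b) ^ 2 - 3 * c * b ^ 2 + 2) / (12 * c * b ^ 2) := by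
  have hcop : (c * b + 1).Coprime (c * b ^ 2) := by
    have hcb : (c * b + 1).Coprime (c * b) := Nat.coprime_self_add_left.2 (Nat.coprime_one_left _)
    exact (hcb.pow_right 2).coprime_dvd_right ⟨c, by ring⟩
  have hcast : dedekindSum (c * b + 1) (c * b ^ 2) =
      dedekindSum ((c * b + 1 : ℕ) : ℤ) ((c * b ^ 2 : ℕ) : ℤ) := by push_cast; rfl
  rw [hcast, dedekindSum_natCast_eq_sum_range_mod (by positivity) hcop,
    show range (c * b ^ 2) = range (c * b * b) by ring_nf, sum_range_mul_eq_sum_sum, sum_comm,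
    sum_congr rfl fun r hr => sum_row_mul_add_one_mul_sq hc hb (mem_range.1 hr), ← mul_sum,
    sum_range_six_mul_sq_sub_six_mul_mul_add_sq]
  field_simp
  ring

theorem dedekind_sum_lens (n b : ℕ) (hn : 1 ≤ n) (hb : 1 ≤ b) :
    dedekindSum (2 * (n : ℤ) ^ 2 * (b : ℤ) ^ 2 + 2 * (n : ℤ) * (b : ℤ) + 1)
        (2 * (n : ℤ) * (b : ℤ) ^ 2) =
      (2 * (n : ℚ) ^ 2 * (b : ℚ) ^ 2 - 3 * (n : ℚ) * (b : ℚ) ^ 2 + 1) /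
        (12 * (n : ℚ) * (b : ℚ) ^ 2) := by
  have hq : 2 * (n : ℤ) * b ^ 2 = ((2 * n : ℕ) : ℤ) * b ^ 2 := by push_cast; ring
  have hp : 2 * (n : ℤ) ^ 2 * b ^ 2 + 2 * n * b + 1 =
      ((2 * n : ℕ) : ℤ) * b + 1 + n * (((2 * n : ℕ) : ℤ) * b ^ 2) := by push_cast; ring
  rw [hp, hq, dedekindSum_add_mul_right, dedekindSum_mul_add_one_mul_sq (by omega) hb]
  push_cast
  field_simp
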